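/- arXiv:1702.06736 — 3 statements merged into one kernel-verified Lean document; each statement's English description precedes it below -/
import Mathlib

section
/- There exists a constant C > 0 such that for all real s ≥ 1 and all natural numbers m, j with 3 ≤ j ≤ m/2 and m ≥ 6, the quantity A_{m,j,s} = (m choose j) · (m−j−2)!^s · (j−1)!^{3s/4} · (j−3)!^{s/4} / ((m−j−2) · (m−3)!^s) is bounded by C. -/
theorem nat_core (j u : ℕ) (hj : 3 ≤ j) (hu : 1 ≤ u) (hju : j ≤ u + 2) :
    (j+u+2)*(j+u+1)*(j+u) ≤ 12 * (j * ((u+2) * ((u+1) * u))) := by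
  have h5 : u + 1 ≤ j * u := by
    calc u + 1 ≤ 3 * u := by omega
      _ ≤ j * u := Nat.mul_le_mul_right u hj
  calc (j+u+2)*(j+u+1)*(j+u)
      ≤ (2*(u+2))*(3*(u+1))*(2*(u+1)) :=
        Nat.mul_le_mul (Nat.mul_le_mul (by omega) (by omega)) (by omega)
    _ = (u+1)*((u+2)*((u+1)*12)) := by ring
    _ ≤ (j*u)*((u+2)*((u+1)*12)) := Nat.mul_le_mul_right _ h5
    _ = 12 * (j * ((u+2) * ((u+1) * u))) := by ring

/-- The quantity `A_{m,j,s} = (m choose j)·(m−j−2)!^s·(j−1)!^{3s/4}·(j−3)!^{s/4}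
/ ((m−j−2)·(m−3)!^s)` is uniformly bounded for `s ≥ 1`, `m ≥ 6`, `3 ≤ j ≤ m/2`. -/
theorem A_mjs_bound :
    ∃ C : ℝ, 0 < C ∧ ∀ s : ℝ, 1 ≤ s → ∀ m j : ℕ, 6 ≤ m → 3 ≤ j → 2 * j ≤ m →
      (m.choose j : ℝ) * ((m - j - 2).factorial : ℝ) ^ s *
          ((j - 1).factorial : ℝ) ^ (3 * s / 4) * ((j - 3).factorial : ℝ) ^ (s / 4) /
        (((m : ℝ) - (j : ℝ) - 2) * ((m - 3).factorial : ℝ) ^ s) ≤ C := by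
  refine ⟨12, by norm_num, ?_⟩
  intro s hs m j hm hj hjm
  have hj3m : j + 3 ≤ m := by omega
  set a := m - j - 2 with ha
  set b := j - 1 with hb
  set c := j - 3 with hc
  set n := m - 3 with hn
  have hA1 : (0:ℝ) < (a.factorial : ℝ) := by exact_mod_cast a.factorial_pos
  have hA2 : (0:ℝ) < (b.factorial : ℝ) := by exact_mod_cast b.factorial_pos
  have hA3 : (0:ℝ) < (c.factorial : ℝ) := by exact_mod_cast c.factorial_pos
  have hM : (0:ℝ) < (n.factorial : ℝ) := by exact_mod_cast n.factorial_pos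
  have hdn : ((a : ℕ) : ℝ) = (m : ℝ) - (j : ℝ) - 2 := by
    have : (a : ℕ) + j + 2 = m := by omega
    push_cast [← this]; ring
  have hd : (0:ℝ) < (m : ℝ) - (j : ℝ) - 2 := by
    rw [← hdn]; exact_mod_cast (by omega : 0 < a)
  have hMs : (0:ℝ) < (n.factorial : ℝ) ^ s := Real.rpow_pos_of_pos hM s
  rw [div_le_iff₀ (by positivity)]
  -- key equality
  have key : (a.factorial : ℝ) ^ s * (b.factorial : ℝ) ^ (3 * s / 4) * (c.factorial : ℝ) ^ (s / 4)
      = ((a.factorial : ℝ) * b.factorial / n.factorial) ^ s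
        * ((c.factorial : ℝ) / b.factorial) ^ (s / 4) * (n.factorial : ℝ) ^ s := by
    rw [Real.div_rpow (by positivity) hM.le, Real.mul_rpow hA1.le hA2.le,
      Real.div_rpow hA3.le hA2.le,
      show (3 * s / 4 : ℝ) = s - s / 4 by ring, Real.rpow_sub hA2]
    field_simp
  -- P ≤ 1
  have hPle : (a.factorial : ℝ) * b.factorial / n.factorial ≤ 1 := by
    rw [div_le_one hM]
    have h1 : b ≤ n := by omega
    have h2 : n - b = a := by omega
    have := Nat.choose_mul_factorial_mul_factorial h1
    rw [h2] at this
    have hch : 1 ≤ n.choose b := Nat.succ_le_of_lt (Nat.choose_pos h1)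
    have : b.factorial * a.factorial ≤ n.factorial := by
      calc b.factorial * a.factorial ≤ n.choose b * b.factorial * a.factorial := by
            rw [mul_assoc]; exact Nat.le_mul_of_pos_left _ (by omega)
        _ = n.factorial := this
    exact_mod_cast (by linarith [(by exact_mod_cast this : (b.factorial : ℝ) * a.factorial ≤ (n.factorial:ℝ))])
  have hPpos : (0:ℝ) < (a.factorial : ℝ) * b.factorial / n.factorial := by positivity
  have hPs : ((a.factorial : ℝ) * b.factorial / n.factorial) ^ s
      ≤ (a.factorial : ℝ) * b.factorial / n.factorial := by
    calc _ ≤ ((a.factorial : ℝ) * b.factorial / n.factorial) ^ (1:ℝ) :=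
          Real.rpow_le_rpow_of_exponent_ge hPpos hPle hs
      _ = _ := Real.rpow_one _
  have hQs : ((c.factorial : ℝ) / b.factorial) ^ (s / 4) ≤ 1 := by
    apply Real.rpow_le_one (by positivity)
    · rw [div_le_one hA2]
      exact_mod_cast Nat.factorial_le (by omega : c ≤ b)
    · linarith
  -- final natural-number inequality: choose * a! * b! ≤ 12 * (a * n!)
  have hnat : m.choose j * a.factorial * b.factorial ≤ 12 * (a * n.factorial) := by
    have ea : m - j = a + 2 := by omega
    have ej : j = b + 1 := by omega
    have em : m = n + 3 := by omega
    have en : n = a + b := by omega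
    have fact2 : ∀ t : ℕ, (t + 2).factorial = (t+2) * ((t+1) * t.factorial) := by
      intro t
      rw [show t + 2 = t + 1 + 1 from rfl, Nat.factorial_succ, Nat.factorial_succ]
    have fact3 : ∀ t : ℕ, (t + 3).factorial = (t+3) * ((t+2) * ((t+1) * t.factorial)) := by
      intro t
      rw [show t + 3 = t + 2 + 1 from rfl, Nat.factorial_succ, fact2]
    have hcmf : m.choose j * j.factorial * (m - j).factorial = m.factorial :=
      Nat.choose_mul_factorial_mul_factorial (by omega)
    rw [ea, ej, em, fact3] at hcmf
    rw [fact2] at hcmf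
    rw [Nat.factorial_succ] at hcmf
    -- hcmf : choose * ((b+1) * b!) * ((a+2) * ((a+1) * a!)) = (n+3)*((n+2)*((n+1)*n!))
    have hK : 0 < (b+1) * ((a+2) * (a+1)) := by positivity
    apply Nat.le_of_mul_le_mul_left _ hK
    have hLHS : (b+1) * ((a+2) * (a+1)) * (m.choose j * a.factorial * b.factorial)
        = (n+3)*((n+2)*((n+1)*n.factorial)) := by
      have hch : m.choose j = (n+3).choose (b+1) := by rw [← em, ← ej]
      rw [hch, ← hcmf]; ring
    rw [hLHS]
    have core : (n+3)*((n+2)*(n+1)) ≤ (b+1) * ((a+2) * (a+1)) * (12 * a) := by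
      have := nat_core (b+1) a (by omega) (by omega) (by omega)
      have hn' : n = (b+1) + a - 1 := by omega
      calc (n+3)*((n+2)*(n+1)) = ((b+1)+a+2)*(((b+1)+a+1)*((b+1)+a)) := by
            rw [en]; ring
        _ ≤ 12 * ((b+1) * ((a+2) * ((a+1) * a))) := by
            calc ((b+1)+a+2)*(((b+1)+a+1)*((b+1)+a))
                = ((b+1)+a+2)*((b+1)+a+1)*((b+1)+a) := by ring
              _ ≤ _ := this
        _ = (b+1) * ((a+2) * (a+1)) * (12 * a) := by ring
    calc (n+3)*((n+2)*((n+1)*n.factorial)) = (n+3)*((n+2)*(n+1)) * n.factorial := by ring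
      _ ≤ (b+1) * ((a+2) * (a+1)) * (12 * a) * n.factorial := Nat.mul_le_mul_right _ core
      _ = (b+1) * ((a+2) * (a+1)) * (12 * (a * n.factorial)) := by ring
  have hnatR : (m.choose j : ℝ) * ((a.factorial : ℝ) * b.factorial / n.factorial)
      ≤ 12 * ((m : ℝ) - (j : ℝ) - 2) := by
    rw [← hdn, ← mul_div_assoc, div_le_iff₀ hM]
    calc (m.choose j : ℝ) * ((a.factorial : ℝ) * b.factorial)
        = ((m.choose j * a.factorial * b.factorial : ℕ) : ℝ) := by push_cast; ring
      _ ≤ ((12 * (a * n.factorial) : ℕ) : ℝ) := by exact_mod_cast hnat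
      _ = 12 * (a : ℝ) * n.factorial := by push_cast; ring
  calc (m.choose j : ℝ) * (a.factorial : ℝ) ^ s * (b.factorial : ℝ) ^ (3 * s / 4)
        * (c.factorial : ℝ) ^ (s / 4)
      = (m.choose j : ℝ) * ((a.factorial : ℝ) ^ s * (b.factorial : ℝ) ^ (3 * s / 4)
        * (c.factorial : ℝ) ^ (s / 4)) := by ring
    _ = (m.choose j : ℝ) * (((a.factorial : ℝ) * b.factorial / n.factorial) ^ s
        * ((c.factorial : ℝ) / b.factorial) ^ (s / 4) * (n.factorial : ℝ) ^ s) := by rw [key]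
    _ ≤ (m.choose j : ℝ) * (((a.factorial : ℝ) * b.factorial / n.factorial)
        * 1 * (n.factorial : ℝ) ^ s) := by
        apply mul_le_mul_of_nonneg_left _ (by positivity)
        apply mul_le_mul_of_nonneg_right _ hMs.le
        exact mul_le_mul hPs hQs (by positivity) (by positivity)
    _ = (m.choose j : ℝ) * ((a.factorial : ℝ) * b.factorial / n.factorial)
        * (n.factorial : ℝ) ^ s := by ring
    _ ≤ 12 * ((m : ℝ) - (j : ℝ) - 2) * (n.factorial : ℝ) ^ s :=
        mul_le_mul_of_nonneg_right hnatR hMs.le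
    _ = 12 * (((m : ℝ) - (j : ℝ) - 2) * (n.factorial : ℝ) ^ s) := by ring
end

section
/- There exists a constant C > 0 such that for all real s ≥ 1 and all natural numbers m, j with m ≥ 7 and m/2 ≤ j ≤ m−3, the quantity A'_{m,j,s} = (m choose j) · (j−3)!^s · (m−j−2)!^{s/4} · (m−j)!^{3s/4} / ((j−3) · (m−3)!^s) is bounded by C. -/
/-- The quantity `A'_{m,j,s} = (m choose j)·(j−3)!^s·(m−j−2)!^{s/4}·(m−j)!^{3s/4}
/ ((j−3)·(m−3)!^s)` is uniformly bounded for `s ≥ 1`, `m ≥ 7`, `m/2 ≤ j ≤ m−3`. -/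
theorem A'_mjs_bound :
    ∃ C : ℝ, 0 < C ∧ ∀ s : ℝ, 1 ≤ s → ∀ m j : ℕ, 7 ≤ m → m ≤ 2 * j → j + 3 ≤ m →
      (m.choose j : ℝ) * ((j - 3).factorial : ℝ) ^ s *
          ((m - j - 2).factorial : ℝ) ^ (s / 4) * ((m - j).factorial : ℝ) ^ (3 * s / 4) /
        (((j : ℝ) - 3) * ((m - 3).factorial : ℝ) ^ s) ≤ C := by
  refine ⟨1024, by norm_num, ?_⟩
  intro s hs m j hm hmj hjm
  obtain ⟨b, rfl⟩ : ∃ b, j = b + 4 := ⟨j - 4, by omega⟩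
  obtain ⟨t, rfl⟩ : ∃ t, m = t + 7 := ⟨m - 7, by omega⟩
  obtain ⟨k, hk, hbk⟩ : ∃ k, t + 7 - (b + 4) = k + 3 ∧ b + k = t := ⟨t - b, by omega, by omega⟩
  rw [hk, show (b+4) - 3 = b + 1 from by omega, show (t+7) - 3 = t + 4 from by omega,
     show (k+3) - 2 = k + 1 from by omega]
  set N : ℝ := ((t+7).choose (b+4) : ℝ) with hN
  set a : ℝ := ((b+1).factorial : ℝ) with ha_def
  set c1 : ℝ := ((k+1).factorial : ℝ) with hc1_def
  set c : ℝ := ((k+3).factorial : ℝ) with hc_def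
  set d : ℝ := ((t+4).factorial : ℝ) with hd_def
  have ha : (0:ℝ) < a := ha_def ▸ (by exact_mod_cast Nat.factorial_pos _)
  have hc1 : (0:ℝ) < c1 := hc1_def ▸ (by exact_mod_cast Nat.factorial_pos _)
  have hc : (0:ℝ) < c := hc_def ▸ (by exact_mod_cast Nat.factorial_pos _)
  have hd : (0:ℝ) < d := hd_def ▸ (by exact_mod_cast Nat.factorial_pos _)
  have hN0 : (0:ℝ) < N := hN ▸ (by exact_mod_cast Nat.choose_pos (show b+4 ≤ t+7 by omega))
  have hc1c : c1 ≤ c := by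
    rw [hc1_def, hc_def]
    exact_mod_cast Nat.factorial_le (by omega)
  have hacd : a * c ≤ d := by
    rw [ha_def, hc_def, hd_def]
    have hdvd := Nat.factorial_mul_factorial_dvd_factorial_add (b+1) (k+3)
    have : (b+1).factorial * (k+3).factorial ≤ (t+4).factorial := by
      refine Nat.le_of_dvd (Nat.factorial_pos _) ?_
      rwa [show (b+1)+(k+3) = t + 4 by omega] at hdvd
    exact_mod_cast this
  have hnum : a * c1 ^ ((1:ℝ)/4) * c ^ ((3:ℝ)/4) ≤ a * c := by
    calc a * c1 ^ ((1:ℝ)/4) * c ^ ((3:ℝ)/4)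
        ≤ a * c ^ ((1:ℝ)/4) * c ^ ((3:ℝ)/4) := by
          have := Real.rpow_le_rpow hc1.le hc1c (by norm_num : (0:ℝ) ≤ 1/4)
          gcongr
      _ = a * c := by
          rw [mul_assoc, ← Real.rpow_add hc]
          norm_num
  -- the base B ≤ 1
  set B : ℝ := a * c1 ^ ((1:ℝ)/4) * c ^ ((3:ℝ)/4) / d with hB_def
  have hB0 : 0 < B := by positivity
  have hB1 : B ≤ 1 := by
    rw [div_le_one hd]
    exact hnum.trans hacd
  -- rewrite the rpow product as B^s * d^s
  have hprod : a ^ s * c1 ^ (s/4) * c ^ (3*s/4) = B ^ s * d ^ s := by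
    rw [← Real.mul_rpow hB0.le hd.le, hB_def, div_mul_cancel₀ _ (ne_of_gt hd),
       Real.mul_rpow (by positivity) (by positivity),
       Real.mul_rpow ha.le (by positivity),
       ← Real.rpow_mul hc1.le, ← Real.rpow_mul hc.le]
    rw [show (1:ℝ)/4 * s = s/4 by ring, show (3:ℝ)/4 * s = 3*s/4 by ring]
  -- key bound on the rpow part
  have hkey : a ^ s * c1 ^ (s/4) * c ^ (3*s/4) ≤ a * c * d ^ s / d := by
    rw [hprod]
    have h1 : B ^ s ≤ B := by
      calc B ^ s ≤ B ^ (1:ℝ) := Real.rpow_le_rpow_of_exponent_ge hB0 hB1 hs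
        _ = B := Real.rpow_one B
    have h2 : B ≤ a * c / d := by
      rw [hB_def]
      gcongr
    calc B ^ s * d ^ s ≤ (a * c / d) * d ^ s := by
          have hB' := h1.trans h2
          have hds0 : (0:ℝ) ≤ d ^ s := Real.rpow_nonneg hd.le s
          exact mul_le_mul_of_nonneg_right hB' hds0
      _ = a * c * d ^ s / d := by ring
  -- nat-level identity and bound
  have e1 : (b+4).factorial = (b+4)*((b+3)*((b+2)*(b+1).factorial)) := by
    rw [show b+4 = (b+1)+1+1+1 by omega]
    simp only [Nat.factorial_succ]
  have e2 : (t+7).factorial = (t+7)*((t+6)*((t+5)*(t+4).factorial)) := by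
    rw [show t+7 = (t+4)+1+1+1 by omega]
    simp only [Nat.factorial_succ]
  have h0 := Nat.choose_mul_factorial_mul_factorial (show b+4 ≤ t+7 by omega)
  rw [hk, e1, e2] at h0
  have idnat : (t+7).choose (b+4) * ((b+1).factorial * (k+3).factorial) *
      ((b+4)*((b+3)*(b+2))) = ((t+7)*((t+6)*(t+5))) * (t+4).factorial := by
    ring_nf
    ring_nf at h0
    exact h0
  have hMnat : (t+7)*((t+6)*(t+5)) ≤ 1024 * ((b+1) * ((b+4)*((b+3)*(b+2)))) := by
    have ht : t ≤ 2*b + 1 := by omega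
    calc (t+7)*((t+6)*(t+5))
        ≤ (2*(b+4))*((2*(b+4))*(2*(b+4))) :=
          Nat.mul_le_mul (by omega) (Nat.mul_le_mul (by omega) (by omega))
      _ ≤ (4*(b+1)*2)*((2*(b+3)*2)*(2*(b+2)*(b+4))) :=
          Nat.mul_le_mul (by omega) (Nat.mul_le_mul (by omega)
            (Nat.mul_le_mul (by omega) (by omega)))
      _ = 64 * ((b+1) * ((b+4)*((b+3)*(b+2)))) := by ring
      _ ≤ 1024 * ((b+1) * ((b+4)*((b+3)*(b+2)))) := Nat.mul_le_mul_right _ (by norm_num)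
  have hfinnat : (t+7).choose (b+4) * ((b+1).factorial * (k+3).factorial) ≤
      1024 * ((b+1) * (t+4).factorial) := by
    have hP : 0 < (b+4)*((b+3)*(b+2)) := by positivity
    refine Nat.le_of_mul_le_mul_right ?_ hP
    calc (t+7).choose (b+4) * ((b+1).factorial * (k+3).factorial) * ((b+4)*((b+3)*(b+2)))
        = ((t+7)*((t+6)*(t+5))) * (t+4).factorial := idnat
      _ ≤ (1024 * ((b+1) * ((b+4)*((b+3)*(b+2))))) * (t+4).factorial :=
          Nat.mul_le_mul_right _ hMnat
      _ = 1024 * ((b+1) * (t+4).factorial) * ((b+4)*((b+3)*(b+2))) := by ring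
  have hNac : N * (a * c) ≤ 1024 * (((b:ℝ)+1) * d) := by
    rw [hN, ha_def, hc_def, hd_def]
    exact_mod_cast hfinnat
  -- finish
  have hK : ((b+4:ℕ):ℝ) - 3 = (b:ℝ) + 1 := by push_cast; ring
  rw [hK]
  have hb1 : (0:ℝ) < (b:ℝ) + 1 := by positivity
  have hds : (0:ℝ) < d ^ s := Real.rpow_pos_of_pos hd s
  rw [show N * a ^ s * c1 ^ (s/4) * c ^ (3*s/4) =
      N * (a ^ s * c1 ^ (s/4) * c ^ (3*s/4)) by ring]
  calc N * (a ^ s * c1 ^ (s/4) * c ^ (3*s/4)) / (((b:ℝ)+1) * d ^ s)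
      ≤ N * (a * c * d ^ s / d) / (((b:ℝ)+1) * d ^ s) := by
        gcongr
    _ = N * (a * c) / (((b:ℝ)+1) * d) := by
        field_simp
    _ ≤ 1024 := by
        rw [div_le_iff₀ (by positivity)]
        exact hNac
end

section
/- Let τ₀ > 0, C > 0, C' > 0 and let u : [0, T*) → ℝ be continuous nonnegative with u(t) ≤ U/(1 − C U t) for U = u(0) and t < 1/(CU). Suppose H : [0,T*) → ℝ is continuous nonnegative with H(t) ≤ a + b·t·exp(C∫_0^t u(s)ds) for constants a, b ≥ 0. Define τ(t) by the ODE τ'(t) + 2Cτ(t)u(t) + 2Cτ(t)^{3/2}(C'u(t) + H(t)) = 0 with τ(0) = τ₀. Then for t ∈ [0, min(T*, 1/(CU))), τ(t) ≥ (1 − CUt)² / (C₀(1+t)⁴) for some constant C₀ depending on τ₀, C, C', a, b, U. -/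
open Set intervalIntegral


private lemma gderiv_aux (C U D : ℝ) (hD : D ≠ 0) (t : ℝ) (ht : (0:ℝ) ≤ t) :
    HasDerivAt (fun t => (1 - C*U*t)^2 / (D^2*(1+t)^4))
      ((2*(1-C*U*t)*(-(C*U)) * (D^2*(1+t)^4) - (1-C*U*t)^2 * (D^2*(4*(1+t)^3))) /
        (D^2*(1+t)^4)^2) t := by
  have h0 : HasDerivAt (fun s : ℝ => 1 - C*U*s) (-(C*U)) t := by
    simpa using ((hasDerivAt_id t).const_mul (C*U)).const_sub 1
  have h1 : HasDerivAt (fun s : ℝ => (1 - C*U*s)^2) (2*(1-C*U*t)*(-(C*U))) t := by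
    have := h0.fun_pow 2
    refine this.congr_deriv ?_
    ring
  have h2' : HasDerivAt (fun s : ℝ => (1+s)^4) (4*(1+t)^3) t := by
    have h : HasDerivAt (fun s : ℝ => 1 + s) 1 t := by
      simpa using (hasDerivAt_id t).const_add 1
    have := h.fun_pow 4
    refine this.congr_deriv ?_
    push_cast
    ring
  have h2 : HasDerivAt (fun s : ℝ => D^2*(1+s)^4) (D^2*(4*(1+t)^3)) t := h2'.const_mul _
  have hden : D^2*(1+t)^4 ≠ 0 := by positivity
  exact h1.div h2 hden

private lemma rpow_aux (x : ℝ) (hx : 0 ≤ x) : (x^2 : ℝ) ^ ((3:ℝ)/2) = x ^ 3 := by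
  rw [← Real.rpow_natCast x 2, ← Real.rpow_mul hx]
  norm_num

set_option maxHeartbeats 1000000 in
private lemma subsol_aux (C C' U D a b uv Hv P Q : ℝ)
    (hC : 0 < C) (hC' : 0 ≤ C') (hU : 0 ≤ U)
    (hP : 0 < P) (hPle : P ≤ 1) (hQ : 1 ≤ Q)
    (hD : C*(C'*U+a+b)/2 + 1 ≤ D)
    (hu : 0 ≤ uv) (hHv : 0 ≤ Hv) (ha : 0 ≤ a) (hb : 0 ≤ b)
    (huP : uv * P ≤ U) (hHP : Hv * P ≤ a*P + b*(Q-1)) :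
    (2*P*(-(C*U)) * (D^2*Q^4) - P^2 * (D^2*(4*Q^3))) / (D^2*Q^4)^2
      + (2*C*(P^2/(D^2*Q^4))*uv + 2*C*(P/(D*Q^2))^3*(C'*uv+Hv)) < 0 := by
  have hDpos : (0:ℝ) < D := by nlinarith [mul_nonneg (mul_nonneg hC.le hC') hU]
  have hQ0 : (0:ℝ) < Q := by linarith
  have hM : (0:ℝ) < D^2*Q^5 := by positivity
  have e₁ : (2*P*(-(C*U)) * (D^2*Q^4) - P^2 * (D^2*(4*Q^3))) / (D^2*Q^4)^2
      = (-(2*C*U*P*Q) - 4*P^2)/(D^2*Q^5) := by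
    field_simp
  have e₂ : 2*C*(P^2/(D^2*Q^4))*uv ≤ (2*C*U*P*Q)/(D^2*Q^5) := by
    have h : 2*C*(P^2/(D^2*Q^4))*uv = (2*C*(uv*P)*(P*Q))/(D^2*Q^5) := by
      field_simp
    rw [h, div_le_div_iff_of_pos_right hM]
    nlinarith [mul_le_mul_of_nonneg_left huP (by positivity : (0:ℝ) ≤ 2*C*(P*Q))]
  have hX : C'*(uv*P) + Hv*P ≤ (C'*U+a+b)*Q := by
    have h1 : C'*(uv*P) ≤ C'*U := mul_le_mul_of_nonneg_left huP hC'
    have h2 : C'*U ≤ C'*U*Q := le_mul_of_one_le_right (mul_nonneg hC' hU) hQ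
    have h3 : a*P ≤ a*Q := by nlinarith
    nlinarith
  have hXQ : 2*C*(C'*(uv*P)+Hv*P) ≤ (4*D-4)*Q := by
    have h4D : 2*C*(C'*U+a+b) ≤ 4*D - 4 := by linarith
    have p1 := mul_le_mul_of_nonneg_left hX (by positivity : (0:ℝ) ≤ 2*C)
    have p2 := mul_le_mul_of_nonneg_right h4D hQ0.le
    nlinarith
  have e₃ : 2*C*(P/(D*Q^2))^3*(C'*uv+Hv) < (4*P^2)/(D^2*Q^5) := by
    have h : 2*C*(P/(D*Q^2))^3*(C'*uv+Hv)
        = (2*C*(C'*(uv*P) + Hv*P)*P^2/(D*Q))/(D^2*Q^5) := by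
      field_simp
    rw [h, div_lt_div_iff_of_pos_right hM]
    have step1 : 2*C*(C'*(uv*P)+Hv*P)*P^2/(D*Q) ≤ ((4*D-4)*Q)*P^2/(D*Q) := by
      apply div_le_div_of_nonneg_right ?_ (by positivity)
      nlinarith [mul_le_mul_of_nonneg_right hXQ (sq_nonneg P)]
    have step2 : ((4*D-4)*Q)*P^2/(D*Q) < 4*P^2 := by
      rw [div_lt_iff₀ (by positivity)]
      nlinarith [mul_pos (mul_pos hP hP) (mul_pos hDpos hQ0), sq_nonneg P]
    linarith
  rw [e₁]
  have hsum : (-(2*C*U*P*Q) - 4*P^2)/(D^2*Q^5) + ((2*C*U*P*Q)/(D^2*Q^5) + (4*P^2)/(D^2*Q^5)) = 0 := by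
    ring
  linarith [add_lt_add_of_le_of_lt e₂ e₃]

private lemma first_touch (g τ : ℝ → ℝ) (t₁ : ℝ) (ht₁ : 0 ≤ t₁)
    (hgc : ∀ t : ℝ, 0 ≤ t → t ≤ t₁ → ContinuousAt g t)
    (hτc : ∀ t : ℝ, 0 ≤ t → t ≤ t₁ → ContinuousAt τ t)
    (h0 : g 0 < τ 0) (h1 : τ t₁ ≤ g t₁) :
    ∃ s : ℝ, 0 < s ∧ s ≤ t₁ ∧ τ s = g s ∧ ∀ t : ℝ, 0 ≤ t → t < s → g t < τ t := by
  set A : Set ℝ := {t | t ∈ Icc (0:ℝ) t₁ ∧ τ t ≤ g t} with hAdef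
  have ht₁A : t₁ ∈ A := ⟨⟨ht₁, le_refl t₁⟩, h1⟩
  have hAne : A.Nonempty := ⟨t₁, ht₁A⟩
  have hAbdd : BddBelow A := ⟨0, fun x hx => hx.1.1⟩
  set s : ℝ := sInf A with hsdef
  have hs0 : 0 ≤ s := le_csInf hAne fun x hx => hx.1.1
  have hst₁ : s ≤ t₁ := csInf_le hAbdd ht₁A
  have hτle : τ s ≤ g s := by
    have hne : (nhdsWithin s A).NeBot :=
      mem_closure_iff_nhdsWithin_neBot.1 (csInf_mem_closure hAne hAbdd)
    have htend : Filter.Tendsto (fun t => g t - τ t) (nhdsWithin s A) (nhds (g s - τ s)) :=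
      (((hgc s hs0 hst₁).sub (hτc s hs0 hst₁)).continuousWithinAt).tendsto
    have hev : ∀ᶠ t in nhdsWithin s A, 0 ≤ g t - τ t := by
      filter_upwards [self_mem_nhdsWithin] with t ht
      linarith [ht.2]
    have := ge_of_tendsto htend hev
    linarith
  have hspos : 0 < s := by
    rcases hs0.eq_or_lt with h | h
    · exact absurd (h ▸ hτle) (by linarith)
    · exact h
  have hbefore : ∀ t : ℝ, 0 ≤ t → t < s → g t < τ t := by
    intro t ht0 hts
    by_contra hcon
    push_neg at hcon
    exact notMem_of_lt_csInf hts hAbdd ⟨⟨ht0, le_trans hts.le hst₁⟩, hcon⟩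
  have hgle : g s ≤ τ s := by
    have htend : Filter.Tendsto (fun t => τ t - g t) (nhdsWithin s (Iio s)) (nhds (τ s - g s)) :=
      (((hτc s hs0 hst₁).sub (hgc s hs0 hst₁)).continuousWithinAt).tendsto
    have hev : ∀ᶠ t in nhdsWithin s (Iio s), 0 ≤ τ t - g t := by
      filter_upwards [Ioo_mem_nhdsLT hspos] with t ht
      linarith [hbefore t ht.1.le ht.2]
    have := ge_of_tendsto htend hev
    linarith
  exact ⟨s, hspos, hst₁, le_antisymm hτle hgle, hbefore⟩

private lemma touch_contra (g τ : ℝ → ℝ) (d₁ d₂ s : ℝ)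
    (hg : HasDerivAt g d₁ s) (hτ' : HasDerivAt τ d₂ s) (hlt : d₁ < d₂)
    (heq : τ s = g s) (hspos : 0 < s)
    (hbef : ∀ t : ℝ, 0 ≤ t → t < s → g t < τ t) : False := by
  have hhd : HasDerivAt (fun t => g t - τ t) (d₁ - d₂) s := hg.sub hτ'
  have htends := hasDerivAt_iff_tendsto_slope.1 hhd
  have htends' : Filter.Tendsto (slope (fun t => g t - τ t) s) (nhdsWithin s (Iio s))
      (nhds (d₁ - d₂)) :=
    htends.mono_left (nhdsWithin_mono s fun x hx => ne_of_lt hx)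
  have hev1 : ∀ᶠ t in nhdsWithin s (Iio s), slope (fun t => g t - τ t) s t < 0 :=
    htends'.eventually_lt_const (by linarith)
  have hev2 : ∀ᶠ t in nhdsWithin s (Iio s), t ∈ Ioo 0 s :=
    Filter.eventually_of_mem (Ioo_mem_nhdsLT hspos) fun x hx => hx
  obtain ⟨t, hslt, htIoo⟩ := (hev1.and hev2).exists
  have hht : g t - τ t < 0 := by linarith [hbef t htIoo.1.le htIoo.2]
  have hslope_pos : 0 < slope (fun t => g t - τ t) s t := by
    rw [slope_def_field]
    apply div_pos_of_neg_of_neg (by rw [heq]; linarith) (by linarith [htIoo.2])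
  linarith

private lemma exp_int_bound (C U Tstar : ℝ) (u : ℝ → ℝ)
    (hC : 0 < C) (hCU : 0 < C * U)
    (huc : ContinuousOn u (Ico (0 : ℝ) Tstar))
    (hu : ∀ t ∈ Ico (0 : ℝ) Tstar, t < 1 / (C * U) → u t ≤ U / (1 - C * U * t))
    (t : ℝ) (ht0 : 0 ≤ t) (htT : t < Tstar) (htU1 : C * U * t < 1) :
    Real.exp (C * ∫ s in (0:ℝ)..t, u s) ≤ (1 - C*U*t)⁻¹ := by
  have hsubset : Icc (0:ℝ) t ⊆ Ico 0 Tstar := fun x hx => ⟨hx.1, lt_of_le_of_lt hx.2 htT⟩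
  have hPx : ∀ x ∈ Icc (0:ℝ) t, 0 < 1 - C*U*x := by
    intro x hx
    nlinarith [mul_le_mul_of_nonneg_left hx.2 hCU.le, hx.1]
  have hui : IntervalIntegrable u MeasureTheory.volume 0 t :=
    ContinuousOn.intervalIntegrable_of_Icc ht0 (huc.mono hsubset)
  have hvc : ContinuousOn (fun s => U/(1 - C*U*s)) (Icc 0 t) := by
    apply ContinuousOn.div continuousOn_const (by fun_prop)
    intro x hx
    exact (hPx x hx).ne'
  have hvi : IntervalIntegrable (fun s => U/(1 - C*U*s)) MeasureTheory.volume 0 t :=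
    ContinuousOn.intervalIntegrable_of_Icc ht0 hvc
  have hmono : (∫ s in (0:ℝ)..t, u s) ≤ ∫ s in (0:ℝ)..t, U/(1 - C*U*s) := by
    apply integral_mono_on ht0 hui hvi
    intro x hx
    apply hu x (hsubset hx)
    rw [lt_div_iff₀ hCU]
    nlinarith [mul_le_mul_of_nonneg_left hx.2 hCU.le]
  have hFder : ∀ x ∈ uIcc (0:ℝ) t,
      HasDerivAt (fun s => -(1/C) * Real.log (1 - C*U*s)) (U/(1 - C*U*x)) x := by
    intro x hx
    rw [uIcc_of_le ht0] at hx
    have hne : 1 - C*U*x ≠ 0 := (hPx x hx).ne'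
    have h1 : HasDerivAt (fun s : ℝ => 1 - C*U*s) (-(C*U)) x := by
      simpa using ((hasDerivAt_id x).const_mul (C*U)).const_sub 1
    have h2 := (h1.log hne).const_mul (-(1/C))
    refine h2.congr_deriv ?_
    field_simp
  have hcalc : (∫ s in (0:ℝ)..t, U/(1 - C*U*s))
      = -(1/C) * Real.log (1 - C*U*t) - (-(1/C) * Real.log (1 - C*U*0)) :=
    integral_eq_sub_of_hasDerivAt hFder hvi
  have hPt : 0 < 1 - C*U*t := hPx t ⟨ht0, le_refl t⟩
  have hlog : C * (∫ s in (0:ℝ)..t, u s) ≤ - Real.log (1 - C*U*t) := by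
    have h1 : C * (∫ s in (0:ℝ)..t, u s) ≤ C * ∫ s in (0:ℝ)..t, U/(1 - C*U*s) :=
      mul_le_mul_of_nonneg_left hmono hC.le
    rw [hcalc] at h1
    have h2 : C * (-(1/C) * Real.log (1 - C*U*t) - (-(1/C) * Real.log (1 - C*U*0)))
        = - Real.log (1 - C*U*t) := by
      rw [mul_zero, sub_zero, Real.log_one]
      field_simp
      ring
    linarith [h1, h2.le, h2.symm.le]
  calc Real.exp (C * ∫ s in (0:ℝ)..t, u s)
      ≤ Real.exp (- Real.log (1 - C*U*t)) := Real.exp_le_exp.2 hlog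
    _ = (1 - C*U*t)⁻¹ := by rw [Real.exp_neg, Real.exp_log hPt]

set_option maxHeartbeats 1000000 in
/-- Explicit lower bound on the shrinking radius `τ(t)` of weighted Gevrey-class
regularity: if `τ` solves `τ' + 2Cτu + 2Cτ^{3/2}(C'u + H) = 0` with `τ(0) = τ₀`,
where `u(t) ≤ U/(1 − CUt)` and `H(t) ≤ a + bt·exp(C∫_0^t u)`, then
`τ(t) ≥ (1 − CUt)²/(C₀(1+t)⁴)`. -/
theorem radius_lower_bound (τ₀ C C' Tstar a b U : ℝ) (u H τ : ℝ → ℝ)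
    (hτ₀ : 0 < τ₀) (hC : 0 < C) (hC' : 0 < C') (hT : 0 < Tstar)
    (ha : 0 ≤ a) (hb : 0 ≤ b)
    (huc : ContinuousOn u (Ico (0 : ℝ) Tstar))
    (hunn : ∀ t ∈ Ico (0 : ℝ) Tstar, 0 ≤ u t)
    (hU : U = u 0)
    (hu : ∀ t ∈ Ico (0 : ℝ) Tstar, t < 1 / (C * U) → u t ≤ U / (1 - C * U * t))
    (hHc : ContinuousOn H (Ico (0 : ℝ) Tstar))
    (hHnn : ∀ t ∈ Ico (0 : ℝ) Tstar, 0 ≤ H t)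
    (hH : ∀ t ∈ Ico (0 : ℝ) Tstar,
      H t ≤ a + b * t * Real.exp (C * ∫ s in (0 : ℝ)..t, u s))
    (hτinit : τ 0 = τ₀)
    (hτ : ∀ t ∈ Ico (0 : ℝ) Tstar,
      HasDerivAt τ
        (-(2 * C * τ t * u t + 2 * C * (τ t) ^ ((3 : ℝ) / 2) * (C' * u t + H t))) t) :
    ∃ C₀ : ℝ, 0 < C₀ ∧ ∀ t ∈ Ico (0 : ℝ) (min Tstar (1 / (C * U))),
      (1 - C * U * t) ^ 2 / (C₀ * (1 + t) ^ 4) ≤ τ t := by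
  have hmem0 : (0:ℝ) ∈ Ico (0:ℝ) Tstar := ⟨le_refl 0, hT⟩
  have hU0 : 0 ≤ U := hU ▸ hunn 0 hmem0
  rcases hU0.eq_or_lt with hUz | hUpos
  · refine ⟨1, one_pos, fun t ht => absurd ht ?_⟩
    rw [← hUz, mul_zero, div_zero]
    intro ht
    exact absurd (lt_of_le_of_lt ht.1 (lt_of_lt_of_le ht.2 (min_le_right _ _))) (lt_irrefl 0)
  have hCU : 0 < C * U := mul_pos hC hUpos
  set D : ℝ := C*(C'*U+a+b)/2 + 1/Real.sqrt τ₀ + 1 with hDdef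
  have hsτ : 0 < Real.sqrt τ₀ := Real.sqrt_pos.2 hτ₀
  have hDpos : 0 < D := by
    have h1 : 0 ≤ C*(C'*U+a+b)/2 := by positivity
    have h2 : 0 < 1/Real.sqrt τ₀ := by positivity
    rw [hDdef]; linarith
  have hDge : C*(C'*U+a+b)/2 + 1 ≤ D := by
    have h2 : 0 < 1/Real.sqrt τ₀ := by positivity
    rw [hDdef]; linarith
  have hg0 : 1/D^2 < τ₀ := by
    have h1 : 1/Real.sqrt τ₀ < D := by
      have h3 : 0 ≤ C*(C'*U+a+b)/2 := by positivity
      rw [hDdef]; linarith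
    have h2 : 1/τ₀ < D^2 := by
      have h4 : (1/Real.sqrt τ₀)^2 < D^2 := by
        apply pow_lt_pow_left₀ h1 (by positivity)
        norm_num
      have h5 : 1/τ₀ = (1/Real.sqrt τ₀)^2 := by
        rw [div_pow, one_pow, Real.sq_sqrt hτ₀.le]
      linarith
    calc 1/D^2 < 1/(1/τ₀) := one_div_lt_one_div_of_lt (by positivity) h2
      _ = τ₀ := one_div_one_div τ₀
  refine ⟨D^2, by positivity, ?_⟩
  intro t₁ ht₁
  by_contra hlt
  push_neg at hlt
  have ht₁T : t₁ < Tstar := lt_of_lt_of_le ht₁.2 (min_le_left _ _)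
  have ht₁U : t₁ < 1/(C*U) := lt_of_lt_of_le ht₁.2 (min_le_right _ _)
  have ht₁0 : 0 ≤ t₁ := ht₁.1
  set g : ℝ → ℝ := fun t => (1 - C*U*t)^2 / (D^2*(1+t)^4) with hgdef
  have hgca : ∀ t : ℝ, 0 ≤ t → t ≤ t₁ → ContinuousAt g t := by
    intro t ht _
    apply ContinuousAt.div (by fun_prop) (by fun_prop)
    positivity
  have hτca : ∀ t : ℝ, 0 ≤ t → t ≤ t₁ → ContinuousAt τ t := fun t ht0 htle =>
    (hτ t ⟨ht0, lt_of_le_of_lt htle ht₁T⟩).continuousAt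
  have h0 : g 0 < τ 0 := by
    have : g 0 = 1/D^2 := by rw [hgdef]; norm_num
    rw [this, hτinit]
    exact hg0
  obtain ⟨s, hspos, hst₁, heq, hbefore⟩ := first_touch g τ t₁ ht₁0 hgca hτca h0 hlt.le
  have hs0 : 0 ≤ s := hspos.le
  have hsIco : s ∈ Ico (0:ℝ) Tstar := ⟨hs0, lt_of_le_of_lt hst₁ ht₁T⟩
  have hsU : s < 1/(C*U) := lt_of_le_of_lt hst₁ ht₁U
  have hsCU : C*U*s < 1 := by
    have := (lt_div_iff₀ hCU).1 hsU
    linarith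
  have hPs : 0 < 1 - C*U*s := by linarith
  have hQs : (1:ℝ) ≤ 1 + s := by linarith
  have hτd := hτ s hsIco
  have hgd := gderiv_aux C U D hDpos.ne' s hs0
  have huPs : u s * (1 - C*U*s) ≤ U := by
    have h1 := hu s hsIco hsU
    rw [le_div_iff₀ hPs] at h1
    exact h1
  have hHPs : H s * (1 - C*U*s) ≤ a*(1 - C*U*s) + b*((1+s)-1) := by
    have h1 := hH s hsIco
    have h2 := exp_int_bound C U Tstar u hC hCU huc hu s hs0 hsIco.2 hsCU
    have hbs : 0 ≤ b * s := mul_nonneg hb hs0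
    have h3 : H s ≤ a + b*s*(1 - C*U*s)⁻¹ := by
      nlinarith [mul_le_mul_of_nonneg_left h2 hbs]
    have h4 := mul_le_mul_of_nonneg_right h3 hPs.le
    have h5 : (a + b*s*(1 - C*U*s)⁻¹) * (1 - C*U*s) = a*(1 - C*U*s) + b*((1+s)-1) := by
      rw [add_mul, mul_assoc (b*s), inv_mul_cancel₀ hPs.ne']; ring
    linarith
  have hkey := subsol_aux C C' U D a b (u s) (H s) (1 - C*U*s) (1+s)
    hC hC'.le hUpos.le hPs (by nlinarith [mul_nonneg hCU.le hs0]) hQs hDge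
    (hunn s hsIco) (hHnn s hsIco) ha hb huPs hHPs
  have hrpow : ((1 - C*U*s)^2 / (D^2*(1+s)^4)) ^ ((3:ℝ)/2)
      = ((1 - C*U*s)/(D*(1+s)^2))^3 := by
    have hx : (0:ℝ) ≤ (1 - C*U*s)/(D*(1+s)^2) := by positivity
    have hsq : (1 - C*U*s)^2 / (D^2*(1+s)^4) = ((1 - C*U*s)/(D*(1+s)^2))^2 := by
      rw [div_pow]
      congr 1
      ring
    rw [hsq]
    exact rpow_aux _ hx
  have hgs : g s = (1 - C*U*s)^2 / (D^2*(1+s)^4) := by rw [hgdef]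
  have hsub : (2*(1-C*U*s)*(-(C*U)) * (D^2*(1+s)^4) - (1-C*U*s)^2 * (D^2*(4*(1+s)^3))) /
        (D^2*(1+s)^4)^2
      < -(2 * C * τ s * u s + 2 * C * (τ s) ^ ((3:ℝ)/2) * (C' * u s + H s)) := by
    rw [heq, hgs, hrpow]
    linarith [hkey]
  exact touch_contra g τ _ _ s hgd hτd hsub heq hspos hbefore
end
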